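/- Translation of the comparative bound on the instrument–confounder correlation: let H be a real Hilbert space, V a complete subspace, and z, u, x ∈ H with all residuals appearing below nonzero. Suppose R_{u∼x|V+span(z)} = 0. Then (a) R_{u∼x|V} = R_{z∼x|V}·R_{z∼u|V}, and (b) R_{z∼u|V+span(x)} = R_{z∼u|V}·√(1 − R²_{z∼x|V}) / √(1 − R²_{z∼x|V}·R²_{z∼u|V}). -/

import Mathlib

/-!
Adding one vector `w` to the conditioning space is a single Gram–Schmidt step: the new residual
of `h` is `h^{⊥V}` minus its component along `w^{⊥V}`. This yields the recursion
`R_{y∼x|V+w} = (R_{y∼x|V} − R_{y∼w|V} R_{x∼w|V}) / (√(1 − R²_{y∼w|V}) √(1 − R²_{x∼w|V}))`.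
For `w = z` the hypothesis makes its numerator vanish, which is (a); for `w = x`, substituting
(a) into the recursion gives (b).
-/

noncomputable section

open Submodule RealInnerProductSpace

variable {H : Type*} [NormedAddCommGroup H] [InnerProductSpace ℝ H]

/-- The residual `h^{⊥M} = h − P_M h` of `h` after projecting onto `M`. -/
def resid (M : Submodule ℝ H) [HasOrthogonalProjection M] (h : H) : H :=
  h - (orthogonalProjection M h : H)

/-- The marginal R²-value `R²_{y∼X} = 1 − ‖y^{⊥X}‖²/‖y‖²`. -/
def R2 (y : H) (X : Submodule ℝ H) [HasOrthogonalProjection X] : ℝ :=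
  1 - ‖resid X y‖ ^ 2 / ‖y‖ ^ 2

/-- The partial R²-value `R²_{y∼X|Z} = (R²_{y∼X+Z} − R²_{y∼Z})/(1 − R²_{y∼Z})`. -/
def R2p (y : H) (X Z : Submodule ℝ H) [HasOrthogonalProjection (X ⊔ Z)]
    [HasOrthogonalProjection Z] : ℝ :=
  (R2 y (X ⊔ Z) - R2 y Z) / (1 - R2 y Z)

/-- The partial R-value `R_{y∼x|Z} = ⟪y^{⊥Z}, x^{⊥Z}⟫/(‖y^{⊥Z}‖·‖x^{⊥Z}‖)`. -/
def Rp (y x : H) (Z : Submodule ℝ H) [HasOrthogonalProjection Z] : ℝ :=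
  ⟪resid Z y, resid Z x⟫ / (‖resid Z y‖ * ‖resid Z x‖)

/-- The partial f-value `f_{y∼x|Z} = R_{y∼x|Z}/√(1 − R²_{y∼x|Z})`. -/
def fp (y x : H) (Z : Submodule ℝ H) [HasOrthogonalProjection Z] : ℝ :=
  Rp y x Z / Real.sqrt (1 - Rp y x Z ^ 2)

/-- The regression estimand `β_{y∼d|M} = ⟪y^{⊥M}, d^{⊥M}⟫/‖d^{⊥M}‖²`. -/
def betaReg (y d : H) (M : Submodule ℝ H) [HasOrthogonalProjection M] : ℝ :=
  ⟪resid M y, resid M d⟫ / ‖resid M d‖ ^ 2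

/-- `σ_{y∼M} = ‖y^{⊥M}‖`. -/
def sigv (y : H) (M : Submodule ℝ H) [HasOrthogonalProjection M] : ℝ :=
  ‖resid M y‖

lemma resid_mem_orthogonal (M : Submodule ℝ H) [HasOrthogonalProjection M] (h : H) :
    resid M h ∈ Mᗮ :=
  sub_starProjection_mem_orthogonal h

lemma resid_eq_of_sub_mem_of_mem_orthogonal (M : Submodule ℝ H) [HasOrthogonalProjection M]
    {h r : H} (hmem : h - r ∈ M) (horth : r ∈ Mᗮ) : resid M h = r := by
  have hproj : M.starProjection h = h - r :=
    eq_starProjection_of_mem_orthogonal hmem (by rwa [sub_sub_cancel])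
  rw [resid, ← starProjection_apply, hproj, sub_sub_cancel]

lemma resid_sup_span_singleton (V : Submodule ℝ H) [HasOrthogonalProjection V] (w : H)
    [HasOrthogonalProjection (V ⊔ ℝ ∙ w)] (h : H) :
    resid (V ⊔ ℝ ∙ w) h =
      resid V h - (⟪resid V h, resid V w⟫ / ‖resid V w‖ ^ 2) • resid V w := by
  set c := ⟪resid V h, resid V w⟫ / ‖resid V w‖ ^ 2
  set r := resid V h - c • resid V w
  have hrV : r ∈ Vᗮ :=
    sub_mem (resid_mem_orthogonal V h) (smul_mem _ _ (resid_mem_orthogonal V w))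
  apply resid_eq_of_sub_mem_of_mem_orthogonal
  · have hw : resid V w ∈ V ⊔ ℝ ∙ w :=
      sub_mem (mem_sup_right (mem_span_singleton_self w)) (mem_sup_left (coe_mem _))
    have hh : h - resid V h ∈ V ⊔ ℝ ∙ w := by
      rw [resid, sub_sub_cancel]; exact mem_sup_left (coe_mem _)
    simpa [r, sub_sub_eq_add_sub, add_sub_right_comm] using add_mem hh (smul_mem _ c hw)
  · rw [← inf_orthogonal, mem_inf, mem_orthogonal_singleton_iff_inner_right]
    refine ⟨hrV, ?_⟩
    have hc : c * ‖resid V w‖ ^ 2 = ⟪resid V h, resid V w⟫ :=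
      div_mul_cancel_of_imp fun h0 => by
        rw [pow_eq_zero_iff two_ne_zero, norm_eq_zero] at h0
        rw [h0, inner_zero_right]
    calc ⟪w, r⟫
        = ⟪resid V w, r⟫ + ⟪V.starProjection w, r⟫ := by
          rw [← inner_add_left, resid, starProjection_apply, sub_add_cancel]
      _ = 0 := by
          rw [inner_right_of_mem_orthogonal (starProjection_apply_mem V w) hrV, add_zero,
            inner_sub_right, inner_smul_right, real_inner_self_eq_norm_sq, hc, real_inner_comm,
            sub_self]

lemma Rp_comm (y x : H) (M : Submodule ℝ H) [HasOrthogonalProjection M] :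
    Rp y x M = Rp x y M := by
  rw [Rp, Rp, real_inner_comm, mul_comm]

lemma Rp_self {y : H} (M : Submodule ℝ H) [HasOrthogonalProjection M] (hy : resid M y ≠ 0) :
    Rp y y M = 1 := by
  rw [Rp, real_inner_self_eq_norm_mul_norm, div_self]
  exact mul_self_ne_zero.2 (norm_ne_zero_iff.2 hy)

section GramSchmidtStep

variable (V : Submodule ℝ H) [HasOrthogonalProjection V] {w : H}
  [HasOrthogonalProjection (V ⊔ ℝ ∙ w)] {y x : H}

lemma inner_resid_sup_span_singleton (hw : resid V w ≠ 0) (hy : resid V y ≠ 0)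
    (hx : resid V x ≠ 0) :
    ⟪resid (V ⊔ ℝ ∙ w) y, resid (V ⊔ ℝ ∙ w) x⟫ =
      ‖resid V y‖ * ‖resid V x‖ * (Rp y x V - Rp y w V * Rp x w V) := by
  have hw' := norm_ne_zero_iff.2 hw
  have hy' := norm_ne_zero_iff.2 hy
  have hx' := norm_ne_zero_iff.2 hx
  simp only [resid_sup_span_singleton, Rp, inner_sub_left, inner_sub_right, inner_smul_left,
    inner_smul_right, real_inner_self_eq_norm_sq, RCLike.conj_to_real]
  rw [real_inner_comm (resid V x) (resid V w)]
  field_simp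
  ring

lemma norm_resid_sup_span_singleton (hw : resid V w ≠ 0) (hy : resid V y ≠ 0) :
    ‖resid (V ⊔ ℝ ∙ w) y‖ = ‖resid V y‖ * √(1 - Rp y w V ^ 2) := by
  rw [norm_eq_sqrt_real_inner, inner_resid_sup_span_singleton V hw hy hy, Rp_self V hy,
    ← sq, ← sq, Real.sqrt_mul (sq_nonneg _), Real.sqrt_sq (norm_nonneg _)]

theorem Rp_sup_span_singleton (hw : resid V w ≠ 0) (hy : resid V y ≠ 0) (hx : resid V x ≠ 0) :
    Rp y x (V ⊔ ℝ ∙ w) =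
      (Rp y x V - Rp y w V * Rp x w V) / (√(1 - Rp y w V ^ 2) * √(1 - Rp x w V ^ 2)) := by
  rw [Rp, inner_resid_sup_span_singleton V hw hy hx, norm_resid_sup_span_singleton V hw hy,
    norm_resid_sup_span_singleton V hw hx, mul_mul_mul_comm, mul_div_mul_left]
  exact mul_ne_zero (norm_ne_zero_iff.2 hy) (norm_ne_zero_iff.2 hx)

end GramSchmidtStep

theorem instrument_confounder_bound_translation_general
    (V : Submodule ℝ H) [CompleteSpace V] (z u x : H)
    [CompleteSpace ↥(V ⊔ (ℝ ∙ z))] [CompleteSpace ↥(V ⊔ (ℝ ∙ x))]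
    (hz : resid V z ≠ 0) (hu : resid V u ≠ 0) (hx : resid V x ≠ 0)
    (hu2 : resid (V ⊔ (ℝ ∙ z)) u ≠ 0) (hx2 : resid (V ⊔ (ℝ ∙ z)) x ≠ 0)
    (h0 : Rp u x (V ⊔ (ℝ ∙ z)) = 0) :
    Rp u x V = Rp z x V * Rp z u V ∧
    Rp z u (V ⊔ (ℝ ∙ x)) =
      Rp z u V * Real.sqrt (1 - Rp z x V ^ 2) /
        Real.sqrt (1 - Rp z x V ^ 2 * Rp z u V ^ 2) := by
  have h_inner : ⟪resid (V ⊔ ℝ ∙ z) u, resid (V ⊔ ℝ ∙ z) x⟫ = 0 := by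
    rw [Rp, div_eq_zero_iff] at h0
    exact h0.resolve_right (mul_ne_zero (norm_ne_zero_iff.2 hu2) (norm_ne_zero_iff.2 hx2))
  have h_factor : Rp u x V = Rp z x V * Rp z u V := by
    rw [inner_resid_sup_span_singleton V hz hu hx, mul_eq_zero, sub_eq_zero] at h_inner
    rw [h_inner.resolve_left (mul_ne_zero (norm_ne_zero_iff.2 hu) (norm_ne_zero_iff.2 hx)),
      Rp_comm u z, Rp_comm x z, mul_comm]
  refine ⟨h_factor, ?_⟩
  rw [Rp_sup_span_singleton V hx hz hu, h_factor, mul_pow,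
    show Rp z u V - Rp z x V * (Rp z x V * Rp z u V) = Rp z u V * (1 - Rp z x V ^ 2) by ring,
    div_mul_eq_div_div, mul_div_assoc, Real.div_sqrt]

/-- translation of the comparative bound on the instrument–confounder
correlation. -/
theorem instrument_confounder_bound_translation [CompleteSpace H]
    (V : Submodule ℝ H) [CompleteSpace V] (z u x : H)
    [CompleteSpace ↥(V ⊔ (ℝ ∙ z))] [CompleteSpace ↥(V ⊔ (ℝ ∙ x))]
    (hz : resid V z ≠ 0) (hu : resid V u ≠ 0) (hx : resid V x ≠ 0)
    (hu2 : resid (V ⊔ (ℝ ∙ z)) u ≠ 0) (hx2 : resid (V ⊔ (ℝ ∙ z)) x ≠ 0)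
    (hz3 : resid (V ⊔ (ℝ ∙ x)) z ≠ 0) (hu3 : resid (V ⊔ (ℝ ∙ x)) u ≠ 0)
    (h0 : Rp u x (V ⊔ (ℝ ∙ z)) = 0) :
    Rp u x V = Rp z x V * Rp z u V ∧
    Rp z u (V ⊔ (ℝ ∙ x)) =
      Rp z u V * Real.sqrt (1 - Rp z x V ^ 2) /
        Real.sqrt (1 - Rp z x V ^ 2 * Rp z u V ^ 2) :=
  instrument_confounder_bound_translation_general V z u x hz hu hx hu2 hx2 h0
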